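/- For every ε > 0 and every (z,t) ∈ V × 𝔱 with z ≠ 0 one has Σ_{j=1}^m (X_j² d_ε)(z,t) = d_ε(z,t)^{1−4k} |z|^{4k−2} ( 4k + Q − 2 − (4k−1) d(z,t)^{4k} d_ε(z,t)^{−4k} ), where Q = m + 2kq. -/

import Mathlib

open MeasureTheory Real

noncomputable section

/-- `V = ℝ^m` with its standard inner product. -/
abbrev Vspace (m : ℕ) : Type := EuclideanSpace ℝ (Fin m)

/-- `𝔱 = ℝ^q` with its standard inner product. -/
abbrev Tspace (q : ℕ) : Type := EuclideanSpace ℝ (Fin q)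

/-- The vector field `X_j` applied to a function `f`: the directional derivative of `f`
at `(z,t)` in the direction `(e_j, (k/2)|z|^{2k-2}[z, e_j])`, where the bracket is `B`. -/
def Xop {m q : ℕ} (B : Vspace m →ₗ[ℝ] Vspace m →ₗ[ℝ] Tspace q)
    (e : Fin m → Vspace m) (k : ℝ) (f : Vspace m × Tspace q → ℝ) (j : Fin m)
    (p : Vspace m × Tspace q) : ℝ :=
  fderiv ℝ f p (e j, ((k / 2) * ‖p.1‖ ^ (2 * k - 2)) • B p.1 (e j))

/-- `|∇_X f| = (Σ_j (X_j f)²)^{1/2}`. -/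
def gradXnorm {m q : ℕ} (B : Vspace m →ₗ[ℝ] Vspace m →ₗ[ℝ] Tspace q)
    (e : Fin m → Vspace m) (k : ℝ) (f : Vspace m × Tspace q → ℝ)
    (p : Vspace m × Tspace q) : ℝ :=
  Real.sqrt (∑ j, (Xop B e k f j p) ^ 2)

/-- The homogeneous norm `d(z,t) = (|z|^{4k} + 16|t|²)^{1/(4k)}`. -/
def dfun {m q : ℕ} (k : ℝ) (p : Vspace m × Tspace q) : ℝ :=
  (‖p.1‖ ^ (4 * k) + 16 * ‖p.2‖ ^ (2 : ℝ)) ^ (1 / (4 * k))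

/-- The regularization `d_ε = (d^{4k} + ε^{4k})^{1/(4k)}`. -/
def dEps {m q : ℕ} (k ε : ℝ) (p : Vspace m × Tspace q) : ℝ :=
  (dfun k p ^ (4 * k) + ε ^ (4 * k)) ^ (1 / (4 * k))

/-- The degenerate `p`-Laplacian `L_{p,k} u = Σ_j X_j(|∇_X u|^{p-2} X_j u)`. -/
def Lpk {m q : ℕ} (B : Vspace m →ₗ[ℝ] Vspace m →ₗ[ℝ] Tspace q)
    (e : Fin m → Vspace m) (k p₀ : ℝ) (u : Vspace m × Tspace q → ℝ)
    (x : Vspace m × Tspace q) : ℝ :=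
  ∑ j, Xop B e k (fun y => gradXnorm B e k u y ^ (p₀ - 2) * Xop B e k u j y) j x

/-!
With `α = 1/(4k)` we have `d_ε = g^α` for `g = |z|^{4k} + 16|t|² + ε^{4k} > 0`, and each `X_j` is a
derivation, so `X_j² d_ε = α(α-1) g^{α-2} (X_j g)² + α g^{α-1} X_j² g`. Here
`X_j g = 4k|z|^{4k-2}⟨z,e_j⟩ + 16k|z|^{2k-2}⟨t,[z,e_j]⟩`, and the sums over `j` are evaluated by
Parseval through `⟨t,[z,e_j]⟩ = ⟨J_t z, e_j⟩`: skew-symmetry gives `⟨J_t z, z⟩ = 0`, the H-type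
condition gives `|J_t z| = |t||z|`, and summing the latter over an orthonormal basis of `𝔱` gives
`Σ_j |[z,e_j]|² = q|z|²`. Hence `Σ_j (X_j g)² = 16k²|z|^{4k-2} d^{4k}` and
`Σ_j X_j² g = 4k|z|^{4k-2}(4k + Q - 2)`.
-/

open scoped RealInnerProductSpace

section HType

variable {V T ι : Type*} [NormedAddCommGroup V] [InnerProductSpace ℝ V]
  [NormedAddCommGroup T] [InnerProductSpace ℝ T] [Fintype ι]
  {B : V →ₗ[ℝ] V →ₗ[ℝ] T} {J : T → V →ₗ[ℝ] V}
  (hskew : ∀ u v, B u v = -B v u) (hJ : ∀ t u v, ⟪J t u, v⟫ = ⟪t, B u v⟫)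
  (hH : ∀ t z, J t (J t z) = -(‖t‖ ^ 2) • z) (e : OrthonormalBasis ι ℝ V)

include hskew in
lemma bracket_self (u : V) : B u u = 0 := by
  have h := hskew u u
  rw [eq_neg_iff_add_eq_zero, ← two_smul ℝ] at h
  exact (smul_eq_zero.1 h).resolve_left two_ne_zero

include hskew hJ in
lemma inner_J_self (t : T) (z : V) : ⟪J t z, z⟫ = 0 := by
  rw [hJ, bracket_self hskew, inner_zero_right]

include hskew hJ hH in
lemma norm_J_sq (t : T) (z : V) : ‖J t z‖ ^ 2 = ‖t‖ ^ 2 * ‖z‖ ^ 2 := by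
  rw [← real_inner_self_eq_norm_sq, hJ, hskew, inner_neg_right, ← hJ, hH,
    real_inner_smul_left, real_inner_self_eq_norm_sq]
  ring

include hskew hJ in
lemma sum_inner_mul_inner_bracket (z : V) (t : T) : ∑ j, ⟪z, e j⟫ * ⟪t, B z (e j)⟫ = 0 := by
  simp_rw [← hJ, ← real_inner_comm (J t z)]
  rw [e.sum_inner_mul_inner, real_inner_comm, inner_J_self hskew hJ]

include hskew hJ hH in
lemma sum_inner_bracket_sq (z : V) (t : T) : ∑ j, ⟪t, B z (e j)⟫ ^ 2 = ‖t‖ ^ 2 * ‖z‖ ^ 2 := by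
  simp_rw [← hJ]
  rw [e.sum_sq_inner_left, norm_J_sq hskew hJ hH]

include hskew hJ hH in
lemma sum_norm_bracket_sq [FiniteDimensional ℝ T] (z : V) :
    ∑ j, ‖B z (e j)‖ ^ 2 = Module.finrank ℝ T * ‖z‖ ^ 2 := by
  let f := stdOrthonormalBasis ℝ T
  simp_rw [← f.sum_sq_inner_right]
  rw [Finset.sum_comm]
  simp_rw [sum_inner_bracket_sq hskew hJ hH e, f.orthonormal.1 _]
  simp

end HType

lemma hasFDerivAt_norm_rpow_of_ne_zero {E : Type*} [NormedAddCommGroup E] [InnerProductSpace ℝ E]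
    {x : E} (hx : x ≠ 0) (a : ℝ) :
    HasFDerivAt (fun x : E ↦ ‖x‖ ^ a) ((a * ‖x‖ ^ (a - 2)) • innerSL ℝ x) x := by
  have hsq : ∀ (y : E) (b : ℝ), (‖y‖ ^ 2) ^ (b / 2) = ‖y‖ ^ b := fun y b ↦ by
    rw [← Real.rpow_natCast, ← Real.rpow_mul (norm_nonneg y)]
    ring_nf
  have h := (hasStrictFDerivAt_norm_sq x).hasFDerivAt.rpow_const (p := a / 2) (by simp [hx])
  simp_rw [hsq, show a / 2 - 1 = (a - 2) / 2 by ring, hsq, ← Nat.cast_smul_eq_nsmul ℝ,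
    smul_smul] at h
  convert h using 2
  push_cast
  ring

lemma hasFDerivAt_norm_rpow' {E : Type*} [NormedAddCommGroup E] [InnerProductSpace ℝ E]
    (x : E) {a : ℝ} (h : x ≠ 0 ∨ 1 < a) :
    HasFDerivAt (fun x : E ↦ ‖x‖ ^ a) ((a * ‖x‖ ^ (a - 2)) • innerSL ℝ x) x :=
  h.elim (hasFDerivAt_norm_rpow_of_ne_zero · a) (hasFDerivAt_norm_rpow x)

section XCalculus

variable {m q : ℕ} (B : Vspace m →ₗ[ℝ] Vspace m →ₗ[ℝ] Tspace q) (e : Fin m → Vspace m)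
  (k : ℝ) (j : Fin m) {f g : Vspace m × Tspace q → ℝ} {p : Vspace m × Tspace q}

lemma Xop_of_hasFDerivAt {f' : Vspace m × Tspace q →L[ℝ] ℝ} (hf : HasFDerivAt f f' p) :
    Xop B e k f j p = f' (e j, ((k / 2) * ‖p.1‖ ^ (2 * k - 2)) • B p.1 (e j)) := by
  rw [Xop, hf.fderiv]

lemma Xop_add (hf : DifferentiableAt ℝ f p) (hg : DifferentiableAt ℝ g p) :
    Xop B e k (fun x ↦ f x + g x) j p = Xop B e k f j p + Xop B e k g j p := by
  rw [Xop_of_hasFDerivAt B e k j (f := fun x ↦ f x + g x) (hf.hasFDerivAt.add hg.hasFDerivAt)]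
  rfl

lemma Xop_add_const (c : ℝ) : Xop B e k (fun x ↦ f x + c) j = Xop B e k f j := by
  ext p
  rw [Xop, Xop, fderiv_add_const]

lemma Xop_mul (hf : DifferentiableAt ℝ f p) (hg : DifferentiableAt ℝ g p) :
    Xop B e k (fun x ↦ f x * g x) j p = f p * Xop B e k g j p + g p * Xop B e k f j p := by
  rw [Xop_of_hasFDerivAt B e k j (f := fun x ↦ f x * g x) (hf.hasFDerivAt.mul hg.hasFDerivAt)]
  rfl

lemma Xop_const_mul (c : ℝ) (hf : DifferentiableAt ℝ f p) :
    Xop B e k (fun x ↦ c * f x) j p = c * Xop B e k f j p := by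
  rw [Xop_of_hasFDerivAt B e k j (hf.hasFDerivAt.const_mul c)]
  rfl

lemma Xop_rpow_const {a : ℝ} (hf : DifferentiableAt ℝ f p) (h : f p ≠ 0 ∨ 1 ≤ a) :
    Xop B e k (fun x ↦ f x ^ a) j p = a * f p ^ (a - 1) * Xop B e k f j p := by
  rw [Xop_of_hasFDerivAt B e k j (hf.hasFDerivAt.rpow_const h)]
  rfl

lemma Xop_Xop_rpow_const (hf : Differentiable ℝ f) (hpos : ∀ x, 0 < f x)
    (hXf : DifferentiableAt ℝ (Xop B e k f j) p) (a : ℝ) :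
    Xop B e k (Xop B e k (fun x ↦ f x ^ a) j) j p =
      a * (a - 1) * f p ^ (a - 2) * Xop B e k f j p ^ 2
        + a * f p ^ (a - 1) * Xop B e k (Xop B e k f j) j p := by
  have hX : Xop B e k (fun x ↦ f x ^ a) j = fun x ↦ a * f x ^ (a - 1) * Xop B e k f j x :=
    funext fun x ↦ Xop_rpow_const B e k j (hf x) (.inl (hpos x).ne')
  have hpow : DifferentiableAt ℝ (fun x ↦ f x ^ (a - 1)) p :=
    (hf p).rpow_const (.inl (hpos p).ne')
  rw [hX, Xop_mul B e k j (hpow.const_mul a) hXf, Xop_const_mul B e k j a hpow,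
    Xop_rpow_const B e k j (hf p) (.inl (hpos p).ne'), sub_sub, one_add_one_eq_two]
  ring

lemma sum_Xop_Xop_rpow_const (hf : Differentiable ℝ f) (hpos : ∀ x, 0 < f x)
    (hXf : ∀ j, DifferentiableAt ℝ (Xop B e k f j) p) (a : ℝ) :
    ∑ j, Xop B e k (Xop B e k (fun x ↦ f x ^ a) j) j p =
      a * (a - 1) * f p ^ (a - 2) * ∑ j, Xop B e k f j p ^ 2
        + a * f p ^ (a - 1) * ∑ j, Xop B e k (Xop B e k f j) j p := by
  simp only [Xop_Xop_rpow_const B e k _ hf hpos (hXf _), Finset.sum_add_distrib, Finset.mul_sum]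

lemma Xop_norm_fst_rpow {a : ℝ} (h : p.1 ≠ 0 ∨ 1 < a) :
    Xop B e k (fun x ↦ ‖x.1‖ ^ a) j p = a * ‖p.1‖ ^ (a - 2) * ⟪p.1, e j⟫ := by
  rw [Xop_of_hasFDerivAt B e k j (f := fun x ↦ ‖x.1‖ ^ a)
    ((hasFDerivAt_norm_rpow' p.1 h).comp p hasFDerivAt_fst)]
  simp [mul_assoc]

lemma Xop_norm_snd_sq :
    Xop B e k (fun x ↦ ‖x.2‖ ^ 2) j p = k * ‖p.1‖ ^ (2 * k - 2) * ⟪p.2, B p.1 (e j)⟫ := by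
  rw [Xop_of_hasFDerivAt B e k j hasFDerivAt_snd.norm_sq]
  simp only [smul_apply, ContinuousLinearMap.comp_apply,
    ContinuousLinearMap.coe_snd', coe_innerSL_apply, real_inner_smul_right, nsmul_eq_mul,
    Nat.cast_ofNat]
  ring

lemma Xop_inner_fst (w : Vspace m) : Xop B e k (fun x ↦ ⟪x.1, w⟫) j p = ⟪e j, w⟫ := by
  rw [Xop_of_hasFDerivAt B e k j (hasFDerivAt_fst.inner ℝ (hasFDerivAt_const w p))]
  simp

lemma hasFDerivAt_bracket_fst (w : Vspace m) :
    HasFDerivAt (fun x : Vspace m × Tspace q ↦ B x.1 w)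
      ((LinearMap.toContinuousLinearMap (B.flip w)).comp (.fst ℝ _ _)) p :=
  (LinearMap.toContinuousLinearMap (B.flip w)).hasFDerivAt.comp p hasFDerivAt_fst

lemma Xop_inner_snd_bracket (w : Vspace m) :
    Xop B e k (fun x ↦ ⟪x.2, B x.1 w⟫) j p =
      ⟪p.2, B (e j) w⟫ + k / 2 * ‖p.1‖ ^ (2 * k - 2) * ⟪B p.1 (e j), B p.1 w⟫ := by
  rw [Xop_of_hasFDerivAt B e k j (hasFDerivAt_snd.inner ℝ (hasFDerivAt_bracket_fst B w))]
  simp [real_inner_smul_left]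

end XCalculus

section Gauge

variable {m q : ℕ} (B : Vspace m →ₗ[ℝ] Vspace m →ₗ[ℝ] Tspace q) (e : Fin m → Vspace m)
  {k : ℝ} (j : Fin m) {p : Vspace m × Tspace q}

lemma dfun_rpow_four_mul (hk : 0 < k) (p : Vspace m × Tspace q) :
    dfun k p ^ (4 * k) = ‖p.1‖ ^ (4 * k) + 16 * ‖p.2‖ ^ 2 := by
  rw [dfun, ← Real.rpow_mul (by positivity), one_div, inv_mul_cancel₀ (by positivity),
    Real.rpow_one, Real.rpow_two]

lemma differentiableAt_norm_fst_rpow {a : ℝ} (h : p.1 ≠ 0 ∨ 1 < a) :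
    DifferentiableAt ℝ (fun x : Vspace m × Tspace q ↦ ‖x.1‖ ^ a) p :=
  ((hasFDerivAt_norm_rpow' p.1 h).comp p hasFDerivAt_fst).differentiableAt

lemma differentiableAt_inner_snd_bracket (w : Vspace m) :
    DifferentiableAt ℝ (fun x : Vspace m × Tspace q ↦ ⟪x.2, B x.1 w⟫) p :=
  (hasFDerivAt_snd.inner ℝ (hasFDerivAt_bracket_fst B w)).differentiableAt

lemma differentiableAt_norm_snd_sq :
    DifferentiableAt ℝ (fun x : Vspace m × Tspace q ↦ ‖x.2‖ ^ 2) p :=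
  hasFDerivAt_snd.norm_sq.differentiableAt

lemma differentiableAt_inner_fst (w : Vspace m) :
    DifferentiableAt ℝ (fun x : Vspace m × Tspace q ↦ ⟪x.1, w⟫) p :=
  (hasFDerivAt_fst.inner ℝ (hasFDerivAt_const w p)).differentiableAt

lemma Xop_dfun_rpow (hk : 1 < 4 * k) :
    Xop B e k (fun x ↦ dfun k x ^ (4 * k)) j = fun x ↦
      4 * k * (‖x.1‖ ^ (4 * k - 2) * ⟪x.1, e j⟫)
        + 16 * k * (‖x.1‖ ^ (2 * k - 2) * ⟪x.2, B x.1 (e j)⟫) := by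
  ext p
  have h4k := differentiableAt_norm_fst_rpow (p := p) (q := q) (Or.inr hk)
  have h2 := differentiableAt_norm_snd_sq (p := p)
  simp_rw [dfun_rpow_four_mul (by linarith : 0 < k)]
  rw [Xop_add, Xop_const_mul, Xop_norm_fst_rpow _ _ _ _ (Or.inr hk), Xop_norm_snd_sq]
  · ring
  all_goals fun_prop

lemma Xop_Xop_dfun_rpow (hk : 1 < 4 * k) (hz : p.1 ≠ 0) :
    Xop B e k (Xop B e k (fun x ↦ dfun k x ^ (4 * k)) j) j p =
      4 * k * ((4 * k - 2) * ‖p.1‖ ^ (4 * k - 4) * ⟪p.1, e j⟫ ^ 2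
        + ‖p.1‖ ^ (4 * k - 2) * ⟪e j, e j⟫)
      + 16 * k * ((2 * k - 2) * ‖p.1‖ ^ (2 * k - 4) * ⟪p.1, e j⟫ * ⟪p.2, B p.1 (e j)⟫
        + ‖p.1‖ ^ (2 * k - 2) * (⟪p.2, B (e j) (e j)⟫
          + k / 2 * ‖p.1‖ ^ (2 * k - 2) * ‖B p.1 (e j)‖ ^ 2)) := by
  have hA := differentiableAt_norm_fst_rpow (q := q) (a := 4 * k - 2) (Or.inl hz)
  have hC := differentiableAt_norm_fst_rpow (q := q) (a := 2 * k - 2) (Or.inl hz)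
  have hB := differentiableAt_inner_fst (e j) (p := p)
  have hE := differentiableAt_inner_snd_bracket B (e j) (p := p)
  rw [Xop_dfun_rpow B e j hk, Xop_add, Xop_const_mul, Xop_const_mul, Xop_mul, Xop_mul,
    Xop_norm_fst_rpow _ _ _ _ (Or.inl hz), Xop_norm_fst_rpow _ _ _ _ (Or.inl hz), Xop_inner_fst,
    Xop_inner_snd_bracket, real_inner_self_eq_norm_sq (B p.1 (e j))]
  · ring_nf
  all_goals fun_prop

lemma differentiable_dfun_rpow (hk : 1 < 4 * k) :
    Differentiable ℝ (fun x : Vspace m × Tspace q ↦ dfun k x ^ (4 * k)) := fun p ↦ by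
  have h4k := differentiableAt_norm_fst_rpow (p := p) (q := q) (Or.inr hk)
  have h2 := differentiableAt_norm_snd_sq (p := p)
  simp_rw [dfun_rpow_four_mul (by linarith : 0 < k)]
  fun_prop

lemma differentiableAt_Xop_dfun_rpow (hk : 1 < 4 * k) (hz : p.1 ≠ 0) :
    DifferentiableAt ℝ (Xop B e k (fun x ↦ dfun k x ^ (4 * k)) j) p := by
  have hA := differentiableAt_norm_fst_rpow (q := q) (a := 4 * k - 2) (Or.inl hz)
  have hC := differentiableAt_norm_fst_rpow (q := q) (a := 2 * k - 2) (Or.inl hz)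
  have hB := differentiableAt_inner_fst (e j) (p := p)
  have hE := differentiableAt_inner_snd_bracket B (e j) (p := p)
  rw [Xop_dfun_rpow B e j hk]
  fun_prop

end Gauge

section Sums

variable {m q : ℕ} {B : Vspace m →ₗ[ℝ] Vspace m →ₗ[ℝ] Tspace q}
  {J : Tspace q → Vspace m →ₗ[ℝ] Vspace m}
  (hskew : ∀ u v, B u v = -B v u) (hJ : ∀ t u v, ⟪J t u, v⟫ = ⟪t, B u v⟫)
  (hH : ∀ t z, J t (J t z) = -(‖t‖ ^ 2) • z) (e : OrthonormalBasis (Fin m) ℝ (Vspace m))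
  {k : ℝ} {z : Vspace m} (t : Tspace q)

include hskew hJ hH in
lemma sum_sq_Xop_dfun_rpow (hk : 1 < 4 * k) (hz : z ≠ 0) :
    ∑ j, Xop B e k (fun x ↦ dfun k x ^ (4 * k)) j (z, t) ^ 2 =
      16 * k ^ 2 * ‖z‖ ^ (4 * k - 2) * dfun k (z, t) ^ (4 * k) := by
  have hr : ‖z‖ ≠ 0 := norm_ne_zero_iff.2 hz
  have h4 : ‖z‖ ^ (4 * k - 2) * ‖z‖ ^ 2 = ‖z‖ ^ (4 * k) := by
    rw [← Real.rpow_add_natCast hr]; ring_nf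
  have h2 : ‖z‖ ^ (2 * k - 2) * ‖z‖ ^ (2 * k - 2) * ‖z‖ ^ 2 = ‖z‖ ^ (4 * k - 2) := by
    rw [← Real.rpow_add (norm_pos_iff.2 hz), ← Real.rpow_add_natCast hr]; ring_nf
  calc ∑ j, Xop B e k (fun x ↦ dfun k x ^ (4 * k)) j (z, t) ^ 2
      = ∑ j, (16 * k ^ 2 * ‖z‖ ^ (4 * k - 2) * ‖z‖ ^ (4 * k - 2) * ⟪z, e j⟫ ^ 2
          + 128 * k ^ 2 * ‖z‖ ^ (4 * k - 2) * ‖z‖ ^ (2 * k - 2) * (⟪z, e j⟫ * ⟪t, B z (e j)⟫)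
          + 256 * k ^ 2 * ‖z‖ ^ (2 * k - 2) * ‖z‖ ^ (2 * k - 2) * ⟪t, B z (e j)⟫ ^ 2) := by
        simp only [Xop_dfun_rpow B e _ hk]
        exact Finset.sum_congr rfl fun j _ ↦ by ring
    _ = 16 * k ^ 2 * ‖z‖ ^ (4 * k - 2) * (‖z‖ ^ (4 * k - 2) * ‖z‖ ^ 2)
          + 256 * k ^ 2 * ‖t‖ ^ 2 * (‖z‖ ^ (2 * k - 2) * ‖z‖ ^ (2 * k - 2) * ‖z‖ ^ 2) := by
        simp only [Finset.sum_add_distrib, ← Finset.mul_sum, e.sum_sq_inner_left,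
          sum_inner_mul_inner_bracket hskew hJ, sum_inner_bracket_sq hskew hJ hH]
        ring
    _ = 16 * k ^ 2 * ‖z‖ ^ (4 * k - 2) * dfun k (z, t) ^ (4 * k) := by
        rw [h4, h2, dfun_rpow_four_mul (by linarith)]
        ring

include hskew hJ hH in
lemma sum_Xop_Xop_dfun_rpow (hk : 1 < 4 * k) (hz : z ≠ 0) :
    ∑ j, Xop B e k (Xop B e k (fun x ↦ dfun k x ^ (4 * k)) j) j (z, t) =
      4 * k * ‖z‖ ^ (4 * k - 2) * (4 * k - 2 + m + 2 * k * q) := by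
  have hr : ‖z‖ ≠ 0 := norm_ne_zero_iff.2 hz
  have h4 : ‖z‖ ^ (4 * k - 4) * ‖z‖ ^ 2 = ‖z‖ ^ (4 * k - 2) := by
    rw [← Real.rpow_add_natCast hr]; ring_nf
  have h2 : ‖z‖ ^ (2 * k - 2) * ‖z‖ ^ (2 * k - 2) * ‖z‖ ^ 2 = ‖z‖ ^ (4 * k - 2) := by
    rw [← Real.rpow_add (norm_pos_iff.2 hz), ← Real.rpow_add_natCast hr]; ring_nf
  calc ∑ j, Xop B e k (Xop B e k (fun x ↦ dfun k x ^ (4 * k)) j) j (z, t)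
      = ∑ j, (4 * k * (4 * k - 2) * ‖z‖ ^ (4 * k - 4) * ⟪z, e j⟫ ^ 2 + 4 * k * ‖z‖ ^ (4 * k - 2)
          + 16 * k * (2 * k - 2) * ‖z‖ ^ (2 * k - 4) * (⟪z, e j⟫ * ⟪t, B z (e j)⟫)
          + 8 * k ^ 2 * ‖z‖ ^ (2 * k - 2) * ‖z‖ ^ (2 * k - 2) * ‖B z (e j)‖ ^ 2) := by
        refine Finset.sum_congr rfl fun j _ ↦ ?_
        rw [Xop_Xop_dfun_rpow B e j hk hz, inner_self_eq_one_of_norm_eq_one (e.orthonormal.1 j),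
          bracket_self hskew, inner_zero_right]
        ring
    _ = 4 * k * (4 * k - 2) * (‖z‖ ^ (4 * k - 4) * ‖z‖ ^ 2) + 4 * k * m * ‖z‖ ^ (4 * k - 2)
          + 8 * k ^ 2 * q * (‖z‖ ^ (2 * k - 2) * ‖z‖ ^ (2 * k - 2) * ‖z‖ ^ 2) := by
        simp only [Finset.sum_add_distrib, ← Finset.mul_sum, e.sum_sq_inner_left,
          sum_inner_mul_inner_bracket hskew hJ, sum_norm_bracket_sq hskew hJ hH,
          finrank_euclideanSpace_fin, Finset.sum_const, Finset.card_univ, Fintype.card_fin,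
          nsmul_eq_mul]
        ring
    _ = 4 * k * ‖z‖ ^ (4 * k - 2) * (4 * k - 2 + m + 2 * k * q) := by
        rw [h4, h2]
        ring

end Sums

theorem stmt5_general {m q : ℕ}
    (B : Vspace m →ₗ[ℝ] Vspace m →ₗ[ℝ] Tspace q)
    (hskew : ∀ u v : Vspace m, B u v = -B v u)
    (J : Tspace q → Vspace m →ₗ[ℝ] Vspace m)
    (hJ : ∀ (t : Tspace q) (u v : Vspace m),
      (inner ℝ (J t u) v : ℝ) = inner ℝ t (B u v))
    (hH : ∀ (t : Tspace q) (z : Vspace m), J t (J t z) = -(‖t‖ ^ 2) • z)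
    (e : OrthonormalBasis (Fin m) ℝ (Vspace m)) (k : ℝ) (hk : 1 ≤ k)
    (Q : ℝ) (hQ : Q = m + 2 * k * q)
    (ε : ℝ) (hε : 0 < ε) (z : Vspace m) (t : Tspace q) (hz : z ≠ 0) :
    ∑ j, Xop B (⇑e) k (Xop B (⇑e) k (dEps k ε) j) j (z, t) =
      dEps k ε (z, t) ^ (1 - 4 * k) * ‖z‖ ^ (4 * k - 2) *
        (4 * k + Q - 2 -
          (4 * k - 1) * dfun k (z, t) ^ (4 * k) * dEps k ε (z, t) ^ (-(4 * k))) := by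
  have hk4 : 1 < 4 * k := by linarith
  have hk0 : k ≠ 0 := by linarith
  set G : Vspace m × Tspace q → ℝ := fun x ↦ dfun k x ^ (4 * k) + ε ^ (4 * k)
  have hGpos : ∀ x, 0 < G x := fun x ↦ by
    simp only [G, dfun]
    positivity
  have hG := hGpos (z, t)
  have hXG (j : Fin m) : Xop B e k G j = Xop B e k (fun x ↦ dfun k x ^ (4 * k)) j :=
    Xop_add_const B e k j _
  have hdEps : dEps k ε = fun x ↦ G x ^ (1 / (4 * k)) := rfl
  rw [hdEps, sum_Xop_Xop_rpow_const B e k (f := G)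
    ((differentiable_dfun_rpow hk4).add_const _) hGpos fun j ↦ by rw [hXG]; exact differentiableAt_Xop_dfun_rpow B e j (p := (z, t)) hk4 hz]
  simp only [hXG]
  rw [sum_sq_Xop_dfun_rpow hskew hJ hH e t hk4 hz, sum_Xop_Xop_dfun_rpow hskew hJ hH e t hk4 hz,
    hQ, ← Real.rpow_mul hG.le, ← Real.rpow_mul hG.le,
    show 1 / (4 * k) * (1 - 4 * k) = 1 / (4 * k) - 1 by field_simp,
    show 1 / (4 * k) * -(4 * k) = -1 by field_simp, Real.rpow_neg_one,
    show 1 / (4 * k) - 2 = 1 / (4 * k) - 1 - 1 by ring, Real.rpow_sub_one hG.ne']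
  field_simp
  ring

/-- For `z ≠ 0`,
`Σ_j X_j² d_ε = d_ε^{1-4k}|z|^{4k-2}(4k+Q-2 - (4k-1)d^{4k}d_ε^{-4k})`,
where `Q = m + 2kq`. -/
theorem stmt5 {m q : ℕ} (hm : 1 ≤ m) (hq : 1 ≤ q)
    (B : Vspace m →ₗ[ℝ] Vspace m →ₗ[ℝ] Tspace q)
    (hskew : ∀ u v : Vspace m, B u v = -B v u)
    (J : Tspace q → Vspace m →ₗ[ℝ] Vspace m)
    (hJ : ∀ (t : Tspace q) (u v : Vspace m),
      (inner ℝ (J t u) v : ℝ) = inner ℝ t (B u v))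
    (hH : ∀ (t : Tspace q) (z : Vspace m), J t (J t z) = -(‖t‖ ^ 2) • z)
    (e : OrthonormalBasis (Fin m) ℝ (Vspace m)) (k : ℝ) (hk : 1 ≤ k)
    (Q : ℝ) (hQ : Q = m + 2 * k * q)
    (ε : ℝ) (hε : 0 < ε) (z : Vspace m) (t : Tspace q) (hz : z ≠ 0) :
    ∑ j, Xop B (⇑e) k (Xop B (⇑e) k (dEps k ε) j) j (z, t) =
      dEps k ε (z, t) ^ (1 - 4 * k) * ‖z‖ ^ (4 * k - 2) *
        (4 * k + Q - 2 -
          (4 * k - 1) * dfun k (z, t) ^ (4 * k) * dEps k ε (z, t) ^ (-(4 * k))) :=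
  stmt5_general B hskew J hJ hH e k hk Q hQ ε hε z t hz
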